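/- Let G_n be a family of simple graphs each containing a clique K_{n_c} with n_g gateway vertices (clique vertices with a neighbor outside the clique), and let x be a non-gateway clique vertex. If n_c − n_g → ∞, then for every fixed t ≥ 0, lim P_{G_n,t}^x(x) = 1. -/

import Mathlib

open Matrix Filter

/-- CTQW transition probability on a finite simple graph. -/
noncomputable def ctqwP {V : Type*} [Fintype V] [DecidableEq V]
    (G : SimpleGraph V) [DecidableRel G.Adj] (t : ℝ) (x y : V) : ℝ :=
  ‖(NormedSpace.exp ((Complex.I * t) • (G.lapMatrix ℂ))) x y‖ ^ 2

/-!
Let `S` be the set of non-gateway vertices of the clique `C` and `k = |S|`. Every vector `w`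
supported on `S` with coordinate sum zero is an eigenvector of the Laplacian with eigenvalue `|C|`:
at `v ∈ S` it gives `(|C| - 1) w v + w v`, and a vertex outside `S` is adjacent to all of `S` (if it
lies in `C`) or to none of it. Split `e_x = w + 1_S / k` with `w = e_x - 1_S / k` such a vector.
The unitary `exp (i t L)` multiplies `w` by a phase and preserves the Euclidean norm `k^(-1/2)` of
the remainder, so `|exp (i t L) x x| ≥ |w x| - k^(-1/2) = 1 - 1/k - k^(-1/2)`, which tends to `1`.
-/

open NormedSpace

namespace Matrix

variable {n 𝕜 : Type*} [Fintype n] [DecidableEq n] [RCLike 𝕜]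

open scoped Matrix.Norms.L2Operator in
theorem exp_mulVec_of_mulVec_eq_smul {A : Matrix n n 𝕜} {w : n → 𝕜} {μ : 𝕜}
    (h : A *ᵥ w = μ • w) : exp A *ᵥ w = exp μ • w := by
  let : NormedAlgebra ℚ (Matrix n n 𝕜) := NormedAlgebra.restrictScalars ℚ 𝕜 _
  -- the matrix all of whose columns are `w` intertwines `μ • 1` with `A`, hence their exponentials
  have hW : SemiconjBy (of fun i (_ : n) => w i) (algebraMap 𝕜 _ μ) A := by
    ext i j
    simpa [mul_apply, algebraMap_matrix_apply, mulVec, dotProduct, mul_comm] using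
      (congrFun h i).symm
  have hexp := hW.exp_right
  rw [← algebraMap_exp_comm] at hexp
  ext i
  simpa [mul_apply, mulVec, dotProduct, algebraMap_matrix_apply, mul_comm] using
    (congrFun (congrFun hexp i) i).symm

open scoped Matrix.Norms.L2Operator in
theorem IsHermitian.exp_I_smul_mem_unitaryGroup {H : Matrix n n ℂ} (hH : H.IsHermitian)
    (t : ℝ) : NormedSpace.exp ((Complex.I * t) • H) ∈ unitaryGroup n ℂ := by
  let : NormedAlgebra ℚ (Matrix n n ℂ) := NormedAlgebra.restrictScalars ℚ ℂ _
  refine exp_mem_unitary_of_mem_skewAdjoint (IsSelfAdjoint.smul_mem_skewAdjoint ?_ hH)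
  simp [skewAdjoint.mem_iff, Complex.conj_ofReal]

open scoped Matrix.Norms.L2Operator in
theorem norm_mulVec_apply_le_of_mem_unitaryGroup {U : Matrix n n 𝕜}
    (hU : U ∈ unitaryGroup n 𝕜) (v : n → 𝕜) (i : n) :
    ‖(U *ᵥ v) i‖ ≤ √(∑ j, ‖v j‖ ^ 2) := by
  have : Nonempty n := ⟨i⟩
  calc ‖(U *ᵥ v) i‖ ≤ ‖WithLp.toLp 2 (U *ᵥ v)‖ := PiLp.norm_apply_le (WithLp.toLp 2 (U *ᵥ v)) i
    _ ≤ ‖U‖ * ‖(EuclideanSpace.equiv n 𝕜).symm v‖ := l2_opNorm_mulVec U _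
    _ = √(∑ j, ‖v j‖ ^ 2) := by
      rw [CStarRing.norm_coe_unitary ⟨U, hU⟩, one_mul, EuclideanSpace.norm_eq]; rfl

theorem sub_le_norm_apply_self_of_mulVec_eq_smul {U : Matrix n n 𝕜}
    (hU : U ∈ unitaryGroup n 𝕜) {x : n} {w v : n → 𝕜} (hwv : Pi.single x 1 = w + v) {ζ : 𝕜}
    (hζ : ‖ζ‖ = 1) (hw : U *ᵥ w = ζ • w) :
    ‖w x‖ - √(∑ j, ‖v j‖ ^ 2) ≤ ‖U x x‖ := by
  have hsplit : U x x = ζ * w x + (U *ᵥ v) x := by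
    simpa [mulVec_add, hw] using congrFun (congrArg (U *ᵥ ·) hwv) x
  have hζw : ‖ζ * w x‖ ≤ ‖U x x‖ + ‖(U *ᵥ v) x‖ := by
    rw [eq_sub_of_add_eq hsplit.symm]
    exact norm_sub_le _ _
  rw [norm_mul, hζ, one_mul] at hζw
  linarith [norm_mulVec_apply_le_of_mem_unitaryGroup hU v x]

end Matrix

namespace SimpleGraph

variable {V : Type*} (G : SimpleGraph V)

def nonGateway (C : Set V) : Set V := {v | v ∈ C ∧ ∀ w ∉ C, ¬ G.Adj v w}

variable {G} {C : Set V} {v : V}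

theorem neighborSet_eq_of_mem_nonGateway (hC : G.IsClique C) (hv : v ∈ G.nonGateway C) :
    G.neighborSet v = C \ {v} := by
  ext w
  by_cases hw : w ∈ C
  · simp only [mem_neighborSet, Set.mem_sdiff, hw, true_and, Set.mem_singleton_iff]
    exact ⟨fun h => (G.ne_of_adj h).symm, fun h => hC hv.1 hw (Ne.symm h)⟩
  · simpa [hw] using hv.2 w hw

variable [Fintype V] [DecidableRel G.Adj]

theorem degree_add_one_of_mem_nonGateway (hC : G.IsClique C) (hv : v ∈ G.nonGateway C) :
    G.degree v + 1 = C.ncard := by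
  rw [← card_neighborSet_eq_degree, Set.fintypeCard_eq_ncard,
    neighborSet_eq_of_mem_nonGateway hC hv, Set.ncard_sdiff_singleton_add_one hv.1]

section

variable {R : Type*} [AddCommGroup R] {w : V → R}

theorem sum_neighborFinset_eq_neg_of_mem (hC : G.IsClique C)
    (hw : ∀ v ∉ G.nonGateway C, w v = 0) (hsum : ∑ v, w v = 0) (hv : v ∈ C) :
    ∑ u ∈ G.neighborFinset v, w u = -w v := by
  classical
  rw [eq_neg_iff_add_eq_zero, ← hsum, ← Finset.sum_erase_add _ _ (Finset.mem_univ v)]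
  congr 1
  refine Finset.sum_subset (fun u hu => ?_) (fun u hu hnu => ?_)
  · simpa using (G.ne_of_adj ((mem_neighborFinset ..).1 hu)).symm
  · refine hw u fun hu' => hnu ?_
    simpa using hC hv hu'.1 (Finset.ne_of_mem_erase hu).symm

theorem sum_neighborFinset_eq_zero_of_notMem (hw : ∀ v ∉ G.nonGateway C, w v = 0) (hv : v ∉ C) :
    ∑ u ∈ G.neighborFinset v, w u = 0 :=
  Finset.sum_eq_zero fun u hu => hw u fun hu' =>
    hu'.2 v hv ((mem_neighborFinset ..).1 hu).symm

end

theorem lapMatrix_mulVec_eq_ncard_smul [DecidableEq V] (hC : G.IsClique C) {R : Type*} [Ring R]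
    {w : V → R} (hw : ∀ v ∉ G.nonGateway C, w v = 0) (hsum : ∑ v, w v = 0) :
    G.lapMatrix R *ᵥ w = (C.ncard : R) • w := by
  ext v
  rw [lapMatrix_mulVec_apply, Pi.smul_apply, smul_eq_mul]
  by_cases hvS : v ∈ G.nonGateway C
  · rw [sum_neighborFinset_eq_neg_of_mem hC hw hsum hvS.1,
      ← degree_add_one_of_mem_nonGateway hC hvS]
    push_cast
    noncomm_ring
  · have hsum_nbr : ∑ u ∈ G.neighborFinset v, w u = 0 := by
      by_cases hvC : v ∈ C
      · rw [sum_neighborFinset_eq_neg_of_mem hC hw hsum hvC, hw v hvS, neg_zero]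
      · exact sum_neighborFinset_eq_zero_of_notMem hw hvC
    simp [hsum_nbr, hw v hvS]

theorem le_norm_exp_lapMatrix_apply_self_of_mem_nonGateway [DecidableEq V] (hC : G.IsClique C)
    {x : V} (hx : x ∈ G.nonGateway C) (t : ℝ) :
    1 - ((G.nonGateway C).ncard : ℝ)⁻¹ - √((G.nonGateway C).ncard : ℝ)⁻¹ ≤
      ‖exp ((Complex.I * t) • G.lapMatrix ℂ) x x‖ := by
  classical
  set S := G.nonGateway C
  set k := S.ncard
  have hk : 1 ≤ (k : ℝ) := mod_cast (Set.ncard_pos (Set.toFinite S)).2 ⟨x, hx⟩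
  have hcard : (Finset.univ.filter (· ∈ S)).card = k := by
    simp [k, Set.ncard_eq_toFinset_card']
  have hk₀ : (k : ℂ) ≠ 0 := mod_cast (by linarith : (k : ℝ) ≠ 0)
  set v : V → ℂ := S.indicator fun _ => (k : ℂ)⁻¹
  have hv_sum : ∑ j, v j = 1 := by
    simp [v, Set.indicator_apply, Finset.sum_ite, hcard, hk₀]
  have hv_norm : ∑ j, ‖v j‖ ^ 2 = (k : ℝ)⁻¹ := by
    simp only [v, Set.indicator_apply, apply_ite (‖·‖ ^ 2), Finset.sum_ite, Finset.sum_const,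
      hcard, norm_zero, zero_pow two_ne_zero, smul_zero, add_zero, norm_inv, RCLike.norm_natCast,
      nsmul_eq_mul]
    field_simp
  set w : V → ℂ := Pi.single x 1 - v
  have hw : ∀ j ∉ S, w j = 0 := fun j hj => by
    simp [w, v, hj, show j ≠ x from fun h => hj (h ▸ hx)]
  have hw_sum : ∑ j, w j = 0 := by simp [w, hv_sum]
  have hwx : ‖w x‖ = 1 - (k : ℝ)⁻¹ := by
    have : w x = ((1 - (k : ℝ)⁻¹ : ℝ) : ℂ) := by simp [w, v, hx]
    rw [this, Complex.norm_real, Real.norm_of_nonneg (by simp [inv_le_one_of_one_le₀ hk])]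
  have heig : exp ((Complex.I * t) • G.lapMatrix ℂ) *ᵥ w = exp (Complex.I * t * C.ncard) • w :=
    Matrix.exp_mulVec_of_mulVec_eq_smul <| by
      rw [smul_mulVec, lapMatrix_mulVec_eq_ncard_smul hC hw hw_sum, smul_smul]
  have hζ : ‖exp (Complex.I * t * C.ncard)‖ = 1 := by
    rw [← Complex.exp_eq_exp_ℂ, ← Complex.norm_exp_ofReal_mul_I (t * C.ncard)]
    push_cast
    ring_nf
  have := Matrix.sub_le_norm_apply_self_of_mulVec_eq_smul
    ((G.isHermitian_lapMatrix ℂ).exp_I_smul_mem_unitaryGroup t) (sub_add_cancel _ _).symm hζ heig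
  rwa [hwx, hv_norm] at this

end SimpleGraph

theorem one_sub_two_mul_le_sq {a ε : ℝ} (h : 1 - ε ≤ a) : 1 - 2 * ε ≤ a ^ 2 := by
  nlinarith [sq_nonneg (a - 1)]

section

variable {V : Type*} [Fintype V] [DecidableEq V] (G : SimpleGraph V) [DecidableRel G.Adj]

theorem ctqwP_le_one (t : ℝ) (x y : V) : ctqwP G t x y ≤ 1 :=
  pow_le_one₀ (norm_nonneg _) <|
    entry_norm_bound_of_unitary ((G.isHermitian_lapMatrix ℂ).exp_I_smul_mem_unitaryGroup t) x y

theorem le_ctqwP_self_of_mem_nonGateway {C : Set V} (hC : G.IsClique C) {x : V}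
    (hx : x ∈ G.nonGateway C) (t : ℝ) :
    1 - 2 * (((G.nonGateway C).ncard : ℝ)⁻¹ + √((G.nonGateway C).ncard : ℝ)⁻¹) ≤ ctqwP G t x x :=
  one_sub_two_mul_le_sq <| by
    simpa [sub_sub] using G.le_norm_exp_lapMatrix_apply_self_of_mem_nonGateway hC hx t

end

theorem ctqw_strong_localization_clique_general
    (N : ℕ → ℕ) (G : (m : ℕ) → SimpleGraph (Fin (N m)))
    (hdec : ∀ m, DecidableRel (G m).Adj)
    (C : (m : ℕ) → Set (Fin (N m)))
    (hclique : ∀ m, (G m).IsClique (C m))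
    (x : (m : ℕ) → Fin (N m))
    (hxC : ∀ m, x m ∈ C m)
    -- `x m` is a non-gateway clique vertex: no neighbor outside the clique
    (hxng : ∀ m, ∀ w ∉ C m, ¬ (G m).Adj (x m) w)
    -- the number of non-gateway clique vertices `n_c − n_g` tends to infinity
    (hgrow : Tendsto
      (fun m => {v | v ∈ C m ∧ ∀ w ∉ C m, ¬ (G m).Adj v w}.ncard) atTop atTop)
    (t : ℝ) :
    Tendsto (fun m => @ctqwP _ _ _ (G m) (hdec m) t (x m) (x m)) atTop (nhds 1) := by
  set k : ℕ → ℕ := fun m => ((G m).nonGateway (C m)).ncard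
  have hk : Tendsto (fun m => (k m : ℝ)⁻¹) atTop (nhds 0) :=
    tendsto_inv_atTop_zero.comp (tendsto_natCast_atTop_atTop.comp hgrow)
  have hlower : Tendsto (fun m => 1 - 2 * ((k m : ℝ)⁻¹ + √(k m : ℝ)⁻¹)) atTop (nhds 1) := by
    simpa using ((hk.add hk.sqrt).const_mul 2).const_sub 1
  refine tendsto_of_tendsto_of_tendsto_of_le_of_le hlower tendsto_const_nhds (fun m => ?_)
    (fun m => ?_)
  · let := hdec m
    exact le_ctqwP_self_of_mem_nonGateway (G m) (hclique m) ⟨hxC m, hxng m⟩ t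
  · let := hdec m
    exact ctqwP_le_one (G m) t _ _

/-- Growing clique causes strong localization: if `x m` is a non-gateway vertex of a clique
`C m` in `G m` and the number `n_c − n_g` of non-gateway clique vertices tends to infinity,
then the CTQW return probability at `x m` tends to `1`. -/
theorem ctqw_strong_localization_clique
    (N : ℕ → ℕ) (G : (m : ℕ) → SimpleGraph (Fin (N m)))
    (hdec : ∀ m, DecidableRel (G m).Adj)
    (C : (m : ℕ) → Set (Fin (N m)))
    (hclique : ∀ m, (G m).IsClique (C m))
    (x : (m : ℕ) → Fin (N m))
    (hxC : ∀ m, x m ∈ C m)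
    -- `x m` is a non-gateway clique vertex: no neighbor outside the clique
    (hxng : ∀ m, ∀ w ∉ C m, ¬ (G m).Adj (x m) w)
    -- the number of non-gateway clique vertices `n_c − n_g` tends to infinity
    (hgrow : Tendsto
      (fun m => {v | v ∈ C m ∧ ∀ w ∉ C m, ¬ (G m).Adj v w}.ncard) atTop atTop)
    (t : ℝ) (ht : 0 ≤ t) :
    Tendsto (fun m => @ctqwP _ _ _ (G m) (hdec m) t (x m) (x m)) atTop (nhds 1) :=
  ctqw_strong_localization_clique_general N G hdec C hclique x hxC hxng hgrow t
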